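/- (Weinberger's inequality) Let m ≥ 1 be a natural number and let a_1 ≥ a_2 ≥ ... ≥ a_m ≥ 0 be real numbers. Then for every real r > 1, ∑_{s=1}^{m} (-1)^{s-1} a_s^r ≥ ( ∑_{s=1}^{m} (-1)^{s-1} a_s )^r, where powers are real (rpow) powers. -/
import Mathlib

open Finset

private lemma alt_shift (m : ℕ) (f : ℕ → ℝ) :
    ∑ s ∈ range (m+1), (-1:ℝ)^s * f s
      = f 0 - ∑ s ∈ range m, (-1:ℝ)^s * f (s+1) := by
  rw [Finset.sum_range_succ']
  simp [pow_succ]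
  ring

private lemma alt_split (k : ℕ) (f : ℕ → ℝ) :
    ∑ s ∈ range (k+2), (-1:ℝ)^s * f s
      = f 0 - f 1 + ∑ s ∈ range k, (-1:ℝ)^s * f (s+2) := by
  rw [Finset.sum_range_succ', Finset.sum_range_succ']
  simp [pow_succ]
  ring

private lemma karamata2 (r : ℝ) (hr : 1 ≤ r) {a b c : ℝ} (hc : 0 ≤ c) (hcb : c ≤ b)
    (hba : b ≤ a) : b ^ r + (a - b + c) ^ r ≤ a ^ r + c ^ r := by
  rcases eq_or_lt_of_le (hcb.trans hba) with h | hca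
  · have h1 : b = a := le_antisymm hba (h ▸ hcb)
    rw [h1, ← h, show c - c + c = c by ring]
  · have cv := convexOn_rpow hr
    have hac : (0:ℝ) < a - c := by linarith
    have ht0 : 0 ≤ (b - c) / (a - c) := div_nonneg (by linarith) hac.le
    have ht1 : 0 ≤ 1 - (b - c) / (a - c) := by
      have := (div_le_one hac).2 (show b - c ≤ a - c by linarith)
      linarith
    have hx : a ∈ Set.Ici (0:ℝ) := Set.mem_Ici.2 (hc.trans (hcb.trans hba))
    have hy : c ∈ Set.Ici (0:ℝ) := Set.mem_Ici.2 hc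
    have H1 := cv.2 hx hy ht0 ht1 (by ring)
    have H2 := cv.2 hx hy ht1 ht0 (by ring)
    simp only [smul_eq_mul] at H1 H2
    have e1 : (b-c)/(a-c) * a + (1 - (b-c)/(a-c)) * c = b := by field_simp; ring
    have e2 : (1 - (b-c)/(a-c)) * a + (b-c)/(a-c) * c = a - b + c := by field_simp; ring
    rw [e1] at H1; rw [e2] at H2
    linarith

private lemma alt_bounds : ∀ (m : ℕ) (a : ℕ → ℝ),
    (∀ i, i + 1 < m → a (i+1) ≤ a i) → (∀ i, i < m → 0 ≤ a i) →
    0 ≤ ∑ s ∈ range m, (-1:ℝ)^s * a s ∧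
      (m = 0 ∨ ∑ s ∈ range m, (-1:ℝ)^s * a s ≤ a 0) := by
  intro m
  induction m with
  | zero => intro a _ _; simp
  | succ n ih =>
    intro a hmono hpos
    obtain ⟨h0, h1⟩ := ih (fun i => a (i+1))
      (fun i hi => hmono (i+1) (by omega)) (fun i hi => hpos (i+1) (by omega))
    rw [alt_shift]
    constructor
    · rcases Nat.eq_zero_or_pos n with h' | h'
      · subst h'
        simpa using hpos 0 (by omega)
      · rcases h1 with h | h
        · exact absurd h h'.ne'
        · have : a 1 ≤ a 0 := hmono 0 (by omega)
          linarith
    · right; linarith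

private lemma weinberger : ∀ (m : ℕ) (a : ℕ → ℝ),
    (∀ i, i + 1 < m → a (i+1) ≤ a i) → (∀ i, i < m → 0 ≤ a i) →
    ∀ r : ℝ, 1 < r →
    (∑ s ∈ range m, (-1:ℝ)^s * a s) ^ r ≤ ∑ s ∈ range m, (-1:ℝ)^s * a s ^ r := by
  intro m
  induction m using Nat.strong_induction_on with
  | _ m ih =>
    match m with
    | 0 =>
      intro a _ _ r hr
      simp [Real.zero_rpow (by linarith : r ≠ 0)]
    | 1 =>
      intro a _ _ r hr
      simp
    | (k+2) =>
      intro a hmono hpos r hr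
      have hmono'' : ∀ i, i + 1 < k → a (i+2+1) ≤ a (i+2) :=
        fun i hi => hmono (i+2) (by omega)
      have hpos'' : ∀ i, i < k → 0 ≤ a (i+2) := fun i hi => hpos (i+2) (by omega)
      obtain ⟨hS0, hS1⟩ := alt_bounds k (fun i => a (i+2)) hmono'' hpos''
      have IH := ih k (by omega) (fun i => a (i+2)) hmono'' hpos'' r hr
      set S : ℝ := ∑ s ∈ range k, (-1:ℝ)^s * a (s+2) with hS
      have hcb : S ≤ a 1 := by
        rcases Nat.eq_zero_or_pos k with hk | hk
        · subst hk
          simpa [hS] using hpos 1 (by omega)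
        · rcases hS1 with h | h
          · exact absurd h hk.ne'
          · exact h.trans (hmono 1 (by omega))
      have hba : a 1 ≤ a 0 := hmono 0 (by omega)
      have key := karamata2 r hr.le hS0 hcb hba
      rw [alt_split k a, alt_split k (fun s => a s ^ r)]
      calc (a 0 - a 1 + S) ^ r ≤ a 0 ^ r + S ^ r - a 1 ^ r := by linarith
        _ ≤ a 0 ^ r - a 1 ^ r + ∑ s ∈ range k, (-1:ℝ)^s * a (s+2) ^ r := by linarith
        _ = a 0 ^ r - a 1 ^ r + ∑ s ∈ range k, (-1:ℝ)^s * (fun s => a s ^ r) (s+2) := rfl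

/-- Weinberger's inequality: Let `m ≥ 1`, let
`a 0 ≥ a 1 ≥ ⋯ ≥ a (m-1) ≥ 0` (the terms `a_1 ≥ ⋯ ≥ a_m ≥ 0`, indexed from `0`).
Then for every real `r > 1`,
`∑_{s=0}^{m-1} (-1)^s (a s)^r ≥ (∑_{s=0}^{m-1} (-1)^s a s)^r` (real rpow powers). -/
theorem stmt_18 (m : ℕ) (hm : 1 ≤ m) (a : ℕ → ℝ)
    (hmono : ∀ i, i + 1 < m → a (i + 1) ≤ a i)
    (hlast : 0 ≤ a (m - 1)) (r : ℝ) (hr : 1 < r) :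
    ∑ s ∈ Finset.range m, (-1 : ℝ) ^ s * a s ^ r ≥
      (∑ s ∈ Finset.range m, (-1 : ℝ) ^ s * a s) ^ r := by
  have key : ∀ j, j < m → ∀ i, i ≤ j → a j ≤ a i := by
    intro j
    induction j with
    | zero => intro _ i hi; simp [Nat.le_zero.1 hi]
    | succ n ihn =>
      intro hj i hi
      rcases Nat.lt_or_ge i (n+1) with h | h
      · exact (hmono n hj).trans (ihn (by omega) i (by omega))
      · have : i = n + 1 := le_antisymm hi h
        simp [this]
  have hpos : ∀ i, i < m → 0 ≤ a i := by
    intro i hi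
    exact hlast.trans (key (m-1) (by omega) i (by omega))
  exact weinberger m a hmono hpos r hr
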